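/- Let 2d ≤ n and let Φ : U → ℝⁿ (U ⊆ ℝⁿ open) be an extended symplectic map with latent dimension 2d, i.e., Φ(x₁, x₂) = (φ(x₁, x₂), x₂) with x₁ ∈ ℝ^{2d}, x₂ ∈ ℝ^{n−2d}, φ differentiable, and φ(·, x₂) symplectic for each fixed x₂. Let B₀ be the constant n×n block matrix with J⁻¹ in the upper-left 2d×2d block and zeros elsewhere, where J is the canonical 2d×2d symplectic matrix. Then Φ is a Poisson map with respect to B₀: its Jacobian satisfies (∂Φ/∂x)(x) · B₀ · (∂Φ/∂x)(x)ᵀ = B₀ for all x ∈ U. -/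

import Mathlib

/-!
Reindex `Fin (2d+m)` as `Fin (2d) ⊕ Fin m`. Since `Φ` fixes the last `m` coordinates near `x`,
the lower-left block of its Jacobian vanishes, and `B₀ = fromBlocks (J⁻¹) 0 0 0`; block
multiplication then reduces `(∂Φ/∂x) B₀ (∂Φ/∂x)ᵀ` to `fromBlocks (M J⁻¹ Mᵀ) 0 0 0` with `M` the
Jacobian of `φ(·, x₂)`. Finally `Mᵀ J M = J` implies `M J Mᵀ = J`: from `J² = -1`, the matrix
`-J Mᵀ J` is a left, hence right, inverse of `M`.
-/

open Matrix

/-- Partial derivative of `F` at `y` in the `i`-th coordinate direction. -/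
noncomputable def pd {n : ℕ} (F : (Fin n → ℝ) → ℝ) (y : Fin n → ℝ) (i : Fin n) : ℝ :=
  fderiv ℝ F y (Pi.single i 1)

/-- The Jacobian matrix of `f` at `y`. -/
noncomputable def jac {n : ℕ} (f : (Fin n → ℝ) → (Fin n → ℝ)) (y : Fin n → ℝ) :
    Matrix (Fin n) (Fin n) ℝ :=
  fun i j => pd (fun x => f x i) y j

/-- The canonical `2d × 2d` symplectic matrix `J = ((0, I_d), (-I_d, 0))`. -/
def Jmat (d : ℕ) : Matrix (Fin (2*d)) (Fin (2*d)) ℝ := fun i j =>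
  if (i:ℕ) < d ∧ (j:ℕ) = (i:ℕ) + d then 1
  else if (j:ℕ) < d ∧ (i:ℕ) = (j:ℕ) + d then -1
  else 0

/-- The constant structure matrix `B₀ = ((J⁻¹, 0), (0, 0))` on `ℝ^{2d+m}`,
with `J⁻¹ = ((0, -I_d), (I_d, 0))` in the upper-left `2d × 2d` block. -/
def B0mat (d m : ℕ) : Matrix (Fin (2*d+m)) (Fin (2*d+m)) ℝ := fun i j =>
  if (i:ℕ) < d ∧ (j:ℕ) = (i:ℕ) + d then -1
  else if (j:ℕ) < d ∧ (i:ℕ) = (j:ℕ) + d then 1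
  else 0

/-- The upper-left `2d × 2d` block of the Jacobian of `Φ : ℝ^{2d+m} → ℝ^{2d+m}`, i.e. the
Jacobian of `x₁ ↦ φ(x₁, x₂)` for the fixed value `x₂` of the last `m` coordinates. -/
noncomputable def blockJac {d m : ℕ} (Φ : (Fin (2*d+m) → ℝ) → (Fin (2*d+m) → ℝ))
    (x : Fin (2*d+m) → ℝ) : Matrix (Fin (2*d)) (Fin (2*d)) ℝ :=
  fun i j => pd (fun z => Φ z (Fin.castLE (Nat.le_add_right _ _) i)) x
    (Fin.castLE (Nat.le_add_right _ _) j)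

open Filter Topology

namespace Matrix

theorem fromBlocks_mul_fromBlocks_zero_mul_transpose {l m n o R : Type*} [Fintype m]
    [Fintype o] [Semiring R] (A : Matrix l m R) (B : Matrix l o R) (D : Matrix n o R)
    (P : Matrix m m R) :
    fromBlocks A B 0 D * (fromBlocks P 0 0 0 : Matrix (m ⊕ o) (m ⊕ o) R) * (fromBlocks A B 0 D)ᵀ
      = (fromBlocks (A * P * Aᵀ) 0 0 0 : Matrix (l ⊕ n) (l ⊕ n) R) := by
  rw [fromBlocks_transpose, fromBlocks_multiply, fromBlocks_multiply]
  simp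

theorem mul_mul_transpose_eq_of_transpose_mul_mul_eq {n R : Type*} [Fintype n]
    [DecidableEq n] [CommRing R] {J M : Matrix n n R} (hJ : J * J = -1)
    (hM : Mᵀ * J * M = J) : M * J * Mᵀ = J := by
  have hleft : (-J * Mᵀ * J) * M = 1 := by
    simp only [Matrix.mul_assoc] at hM ⊢
    rw [hM, Matrix.neg_mul, hJ, neg_neg]
  have hright : M * (-J * Mᵀ * J) = 1 := mul_eq_one_comm.mp hleft
  calc M * J * Mᵀ = M * (-J * Mᵀ * J) * J := by
        simp only [Matrix.mul_assoc, hJ, Matrix.mul_neg, Matrix.neg_mul, Matrix.mul_one, neg_neg]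
    _ = J := by rw [hright, Matrix.one_mul]

end Matrix

def finTwoMulEquivSum (d : ℕ) : Fin (2 * d) ≃ Fin d ⊕ Fin d :=
  (finCongr (two_mul d)).trans finSumFinEquiv.symm

@[simp]
theorem val_finTwoMulEquivSum_symm_inl (d : ℕ) (i : Fin d) :
    ((finTwoMulEquivSum d).symm (.inl i) : ℕ) = i := rfl

@[simp]
theorem val_finTwoMulEquivSum_symm_inr (d : ℕ) (i : Fin d) :
    ((finTwoMulEquivSum d).symm (.inr i) : ℕ) = d + i := rfl

theorem Jmat_eq_neg_J_submatrix (d : ℕ) :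
    Jmat d = (-J (Fin d) ℝ).submatrix (finTwoMulEquivSum d) (finTwoMulEquivSum d) := by
  ext i j
  obtain ⟨i | i, rfl⟩ := (finTwoMulEquivSum d).symm.surjective i <;>
  obtain ⟨j | j, rfl⟩ := (finTwoMulEquivSum d).symm.surjective j <;>
  simp [Jmat, J, one_apply, Fin.ext_iff] <;> grind

theorem Jmat_mul_Jmat (d : ℕ) : Jmat d * Jmat d = -1 := by
  rw [Jmat_eq_neg_J_submatrix, submatrix_mul_equiv, neg_mul_neg, J_squared,
    submatrix_neg, Pi.neg_apply, Pi.neg_apply, submatrix_one_equiv]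

theorem B0mat_submatrix_finSumFinEquiv (d m : ℕ) :
    (B0mat d m).submatrix finSumFinEquiv finSumFinEquiv = fromBlocks (-Jmat d) 0 0 0 := by
  ext (i | i) (j | j) <;> simp [B0mat, Jmat] <;> grind

theorem jac_apply_of_eventuallyEq_apply {n : ℕ} {f : (Fin n → ℝ) → Fin n → ℝ}
    {y : Fin n → ℝ} {i : Fin n} (h : (fun z => f z i) =ᶠ[𝓝 y] fun z => z i) (k : Fin n) :
    jac f y i k = (1 : Matrix (Fin n) (Fin n) ℝ) i k := by
  rw [jac, pd, h.fderiv_eq, fderiv_apply differentiableAt_id i]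
  simp [one_apply, Pi.single_apply]

theorem blockJac_eq_toBlocks₁₁ {d m : ℕ} (Φ : (Fin (2*d+m) → ℝ) → (Fin (2*d+m) → ℝ))
    (x : Fin (2*d+m) → ℝ) :
    blockJac Φ x = ((jac Φ x).submatrix finSumFinEquiv finSumFinEquiv).toBlocks₁₁ := rfl

theorem statement_8_general {d m : ℕ} (U : Set (Fin (2*d+m) → ℝ)) (hU : IsOpen U)
    (Φ : (Fin (2*d+m) → ℝ) → (Fin (2*d+m) → ℝ))
    (hform : ∀ x ∈ U, ∀ i : Fin (2*d+m), 2*d ≤ (i:ℕ) → Φ x i = x i)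
    (hsymp : ∀ x ∈ U, (blockJac Φ x)ᵀ * Jmat d * blockJac Φ x = Jmat d) :
    ∀ x ∈ U, jac Φ x * B0mat d m * (jac Φ x)ᵀ = B0mat d m := by
  intro x hx
  set A := (jac Φ x).submatrix finSumFinEquiv finSumFinEquiv
  have hA₂₁ : A.toBlocks₂₁ = 0 := by
    ext i j
    refine (jac_apply_of_eventuallyEq_apply ?_ _).trans (one_apply_ne ?_)
    · filter_upwards [hU.mem_nhds hx] with z hz using hform z hz _ (by simp)
    · simp [Fin.ext_iff]
      omega
  have hA : A = fromBlocks (blockJac Φ x) A.toBlocks₁₂ 0 A.toBlocks₂₂ := by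
    rw [blockJac_eq_toBlocks₁₁, ← hA₂₁, fromBlocks_toBlocks]
  have hM := mul_mul_transpose_eq_of_transpose_mul_mul_eq (Jmat_mul_Jmat d) (hsymp x hx)
  have hblock : A * fromBlocks (-Jmat d) 0 0 0 * Aᵀ = fromBlocks (-Jmat d) 0 0 0 := by
    rw [hA, fromBlocks_mul_fromBlocks_zero_mul_transpose, Matrix.mul_neg, Matrix.neg_mul, hM]
  apply (reindex finSumFinEquiv.symm finSumFinEquiv.symm).injective
  simp only [reindex_apply, Equiv.symm_symm]
  rw [← submatrix_mul_equiv _ _ _ finSumFinEquiv, ← submatrix_mul_equiv _ _ _ finSumFinEquiv,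
    ← transpose_submatrix, B0mat_submatrix_finSumFinEquiv]
  exact hblock

/-- an extended symplectic map `Φ(x₁,x₂) = (φ(x₁,x₂), x₂)` with latent dimension
`2d` (i.e. `Φ` fixes the last `m = n - 2d` coordinates and `φ(·,x₂)` is symplectic for each
fixed `x₂`) is a Poisson map with respect to `B₀`: `(∂Φ/∂x) B₀ (∂Φ/∂x)ᵀ = B₀` on `U`. -/
theorem statement_8 {d m : ℕ} (U : Set (Fin (2*d+m) → ℝ)) (hU : IsOpen U)
    (Φ : (Fin (2*d+m) → ℝ) → (Fin (2*d+m) → ℝ))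
    (hdiff : ∀ x ∈ U, DifferentiableAt ℝ Φ x)
    (hform : ∀ x ∈ U, ∀ i : Fin (2*d+m), 2*d ≤ (i:ℕ) → Φ x i = x i)
    (hsymp : ∀ x ∈ U, (blockJac Φ x)ᵀ * Jmat d * blockJac Φ x = Jmat d) :
    ∀ x ∈ U, jac Φ x * B0mat d m * (jac Φ x)ᵀ = B0mat d m :=
  statement_8_general U hU Φ hform hsymp
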